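/- arXiv:2302.14160 — 7 statements merged into one kernel-verified Lean document; each statement's English description precedes it below -/
import Mathlib

section
/- For the two-voice canonic scheme S = {(0,0), (t,p)B} with t > 0 and the second voice marked as bass, the number of valid n-note canons is V_n(S) = 7^n if n ≤ t, and V_n(S) = 7^t · 4^(n-t) if n > t. -/
open Filter

/-- A voice of a canonic scheme: time displacement `t`, pitch displacement `p`
(mod 7), and whether it is the marked bass voice. -/
structure Voice where
  t : ℤ
  p : ZMod 7
  bass : Bool

/-- A melody `x` (0-indexed: `x k` is the (k+1)-st note) of length `n` is a valid
canon for the scheme `S`: for any two voices sounding simultaneously, the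
difference is not a second or seventh `{1,6}`, and not a fourth `3` above a
marked bass. -/
def ValidOn (S : List Voice) (n : ℕ) (x : ℕ → ZMod 7) : Prop :=
  ∀ vi ∈ S, ∀ vj ∈ S, ∀ a b : ℕ, a < n → b < n →
    (a : ℤ) + vi.t = (b : ℤ) + vj.t →
    ((x a + vi.p) - (x b + vj.p) ∉ ({1, 6} : Set (ZMod 7)) ∧
     (vj.bass = true → (x a + vi.p) - (x b + vj.p) ≠ 3))

/-- `V S n` is the number of valid `n`-note canons for the scheme `S`
(melodies normalized to be `0` beyond position `n`). -/
noncomputable def V (S : List Voice) (n : ℕ) : ℕ :=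
  Nat.card {x : ℕ → ZMod 7 // ValidOn S n x ∧ ∀ k, n ≤ k → x k = 0}

/-!
Two distinct voices sound together only as the upper voice at time `b + t` over the bass at
time `b`, so a melody is a valid canon exactly when every lag-`t` difference
`x (b + t) - x b - p` is one of the four intervals `{0, 2, 4, 5}`. Since `t > 0`, the first `t`
notes are then free and each later note is determined, up to four choices, by the note `t`
steps before it.
-/

section LagConstrained

variable {G : Type*} [AddGroup G] (A : Set G) (t : ℕ)

def LagCond (n : ℕ) (x : ℕ → G) : Prop :=
  ∀ b, b + t < n → x (b + t) - x b ∈ A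

abbrev LagConstrained (n : ℕ) : Type _ :=
  {x : ℕ → G // LagCond A t n x ∧ ∀ k, n ≤ k → x k = 0}

variable {A t}

theorem lagCond_congr {n : ℕ} {x y : ℕ → G} (h : ∀ k < n, x k = y k) :
    LagCond A t n x ↔ LagCond A t n y := by
  refine forall_congr' fun b => imp_congr_right fun hb => ?_
  rw [h (b + t) hb, h b (by omega)]

theorem lagCond_succ {n : ℕ} {x : ℕ → G} :
    LagCond A t (n + 1) x ↔ LagCond A t n x ∧ (t ≤ n → x n - x (n - t) ∈ A) := by
  refine ⟨fun h => ⟨fun b hb => h b (by omega), fun htn => ?_⟩, fun ⟨h, hn⟩ b hb => ?_⟩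
  · simpa [Nat.sub_add_cancel htn] using h (n - t) (by omega)
  · rcases Nat.lt_succ_iff_lt_or_eq.mp hb with hb | hb
    · exact h b hb
    · simpa [← hb] using hn (by omega)

def LagConstrained.succEquiv (ht : 0 < t) (n : ℕ) :
    LagConstrained A t (n + 1) ≃
      Σ y : LagConstrained A t n, {c : G // t ≤ n → c - y.1 (n - t) ∈ A} where
  toFun x :=
    have hx := lagCond_succ.mp x.2.1
    ⟨⟨Function.update x.1 n 0,
        (lagCond_congr fun k hk => Function.update_of_ne hk.ne _ _).mpr hx.1,
        fun k hk => by
          rcases hk.lt_or_eq with hk | rfl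
          · rw [Function.update_of_ne hk.ne', x.2.2 k hk]
          · exact Function.update_self _ _ _⟩,
      ⟨x.1 n, fun htn => by
        simpa [Function.update_of_ne (show n - t ≠ n by omega)] using hx.2 htn⟩⟩
  invFun y :=
    ⟨Function.update y.1.1 n y.2.1,
      lagCond_succ.mpr
        ⟨(lagCond_congr fun k hk => Function.update_of_ne hk.ne _ _).mpr y.1.2.1, fun htn => by
          simpa [Function.update_of_ne (show n - t ≠ n by omega)] using y.2.2 htn⟩,
      fun k hk => by
        rw [Function.update_of_ne (by omega), y.1.2.2 k (by omega)]⟩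
  left_inv x := by
    ext k
    simp
  right_inv y := by
    obtain ⟨⟨y, hy, hy0⟩, c, hc⟩ := y
    refine Sigma.subtype_ext (Subtype.ext ?_) (by simp)
    simpa using (hy0 n le_rfl).symm

theorem card_lagConstrained_zero : Nat.card (LagConstrained A t 0) = 1 := by
  have : Subsingleton (LagConstrained A t 0) :=
    ⟨fun x y => Subtype.ext <| funext fun k => by rw [x.2.2 k k.zero_le, y.2.2 k k.zero_le]⟩
  have : Nonempty (LagConstrained A t 0) := ⟨⟨0, fun _ hb => absurd hb (by omega), fun _ _ => rfl⟩⟩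
  exact Nat.card_unique

theorem card_lagConstrained_succ_of_lt (ht : 0 < t) {n : ℕ} (hn : n < t) :
    Nat.card (LagConstrained A t (n + 1)) = Nat.card (LagConstrained A t n) * Nat.card G := by
  rw [Nat.card_congr ((LagConstrained.succEquiv ht n).trans
    (Equiv.sigmaEquivProdOfEquiv fun _ => Equiv.subtypeUnivEquiv fun _ h => absurd h (by omega))),
    Nat.card_prod]

theorem card_lagConstrained_succ_of_le (ht : 0 < t) {n : ℕ} (hn : t ≤ n) :
    Nat.card (LagConstrained A t (n + 1)) = Nat.card (LagConstrained A t n) * Nat.card A := by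
  rw [Nat.card_congr ((LagConstrained.succEquiv ht n).trans
    (Equiv.sigmaEquivProdOfEquiv fun y =>
      Equiv.subtypeEquiv (q := (· ∈ A)) (Equiv.subRight (y.1 (n - t))) fun _ => by simp [hn])),
    Nat.card_prod]

theorem card_lagConstrained (ht : 0 < t) (n : ℕ) :
    Nat.card (LagConstrained A t n) = Nat.card G ^ min n t * Nat.card A ^ (n - t) := by
  induction n with
  | zero => simp [card_lagConstrained_zero]
  | succ n ih =>
    rcases lt_or_ge n t with hn | hn
    · rw [card_lagConstrained_succ_of_lt ht hn, ih, min_eq_left hn.le,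
        min_eq_left (by omega : n + 1 ≤ t), Nat.sub_eq_zero_of_le hn.le,
        Nat.sub_eq_zero_of_le (by omega : n + 1 ≤ t)]
      ring
    · rw [card_lagConstrained_succ_of_le ht hn, ih, min_eq_right hn,
        min_eq_right (by omega), Nat.sub_add_comm hn]
      ring

end LagConstrained

def twoVoiceBass (t : ℕ) (p : ZMod 7) : List Voice := [⟨0, 0, false⟩, ⟨(t : ℤ), p, true⟩]

def bassConsonances : Finset (ZMod 7) := {0, 2, 4, 5}

/-- The interval `d` above the bass is constrained as seen from the upper voice, and `-d` as seen
from the bass, which excludes only seconds and sevenths. -/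
theorem mem_bassConsonances_iff (d : ZMod 7) :
    d ∈ bassConsonances ↔
      (d ∉ ({1, 6} : Set (ZMod 7)) ∧ d ≠ 3) ∧ -d ∉ ({1, 6} : Set (ZMod 7)) := by
  simp only [Set.mem_insert_iff, Set.mem_singleton_iff]
  revert d
  decide

theorem validOn_twoVoiceBass_iff {t : ℕ} {p : ZMod 7} {n : ℕ} {x : ℕ → ZMod 7} :
    ValidOn (twoVoiceBass t p) n x ↔
      LagCond {d | d - p ∈ bassConsonances} t n x := by
  have key (b : ℕ) : x (b + t) - x b - p ∈ bassConsonances ↔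
      (x (b + t) + 0 - (x b + p) ∉ ({1, 6} : Set (ZMod 7)) ∧
        x (b + t) + 0 - (x b + p) ≠ 3) ∧
      x b + p - (x (b + t) + 0) ∉ ({1, 6} : Set (ZMod 7)) := by
    rw [mem_bassConsonances_iff]
    ring_nf
  have self_ok (d : ZMod 7) : d - d ∉ ({1, 6} : Set (ZMod 7)) ∧ d - d ≠ 3 := by
    simp only [sub_self, Set.mem_insert_iff, Set.mem_singleton_iff]
    decide
  constructor
  · intro h b hb
    have over_bass := h ⟨0, 0, false⟩ (by simp [twoVoiceBass]) ⟨t, p, true⟩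
      (by simp [twoVoiceBass]) (b + t) b hb (by omega) (by push_cast; ring)
    have under_upper := h ⟨t, p, true⟩ (by simp [twoVoiceBass]) ⟨0, 0, false⟩
      (by simp [twoVoiceBass]) b (b + t) (by omega) hb (by push_cast; ring)
    exact (key b).mpr ⟨⟨over_bass.1, over_bass.2 rfl⟩, under_upper.1⟩
  · intro h vi hvi vj hvj a b ha hb hab
    simp only [twoVoiceBass, List.mem_cons, List.not_mem_nil, or_false] at hvi hvj
    rcases hvi with rfl | rfl <;> rcases hvj with rfl | rfl <;> simp only at hab ⊢
    · obtain rfl : a = b := by omega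
      exact ⟨(self_ok _).1, fun _ => (self_ok _).2⟩
    · obtain rfl : a = b + t := by omega
      exact ⟨((key b).mp (h b ha)).1.1, fun _ => ((key b).mp (h b ha)).1.2⟩
    · obtain rfl : b = a + t := by omega
      exact ⟨((key a).mp (h a hb)).2, nofun⟩
    · obtain rfl : a = b := by omega
      exact ⟨(self_ok _).1, fun _ => (self_ok _).2⟩

theorem V_twoVoiceBass {t : ℕ} (ht : 0 < t) (p : ZMod 7) (n : ℕ) :
    V (twoVoiceBass t p) n = 7 ^ min n t * 4 ^ (n - t) := by
  have card_allowed : Nat.card {d : ZMod 7 | d - p ∈ bassConsonances} = 4 :=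
    (Nat.card_congr (Equiv.subtypeEquiv (q := (· ∈ bassConsonances)) (Equiv.subRight p)
      fun _ => Iff.rfl)).trans (Nat.card_eq_finsetCard _)
  calc V (twoVoiceBass t p) n
      = Nat.card (LagConstrained {d | d - p ∈ bassConsonances} t n) :=
        Nat.card_congr <| Equiv.subtypeEquivRight fun _ =>
          and_congr_left' validOn_twoVoiceBass_iff
    _ = 7 ^ min n t * 4 ^ (n - t) := by
        rw [card_lagConstrained ht, card_allowed, Nat.card_zmod]

/-- two-voice scheme {(0,0),(t,p)B}, t > 0. -/
theorem two_voice_bass_count (t : ℕ) (ht : 0 < t) (p : ZMod 7) (n : ℕ) :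
    (n ≤ t → V [⟨0, 0, false⟩, ⟨(t : ℤ), p, true⟩] n = 7 ^ n) ∧
    (t < n → V [⟨0, 0, false⟩, ⟨(t : ℤ), p, true⟩] n = 7 ^ t * 4 ^ (n - t)) := by
  refine ⟨fun hn => ?_, fun hn => ?_⟩ <;> rw [← twoVoiceBass, V_twoVoiceBass ht]
  · rw [min_eq_left hn, Nat.sub_eq_zero_of_le hn, pow_zero, mul_one]
  · rw [min_eq_right hn.le]
end

section
/- For the two-voice canonic scheme S = {(0,0), (t,p)} with t > 0 and no marked bass, the number of valid n-note canons is V_n(S) = 7^n if n ≤ t, and V_n(S) = 7^t · 5^(n-t) if n > t. -/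
open Filter

/-!
Only notes `t` apart sound together, so the canon is valid iff every difference
`x (k + t) - x k - p` avoids `{1, 6}`. Writing the melody note by note, each of the first `t`
notes is free, while note `k ≥ t` is pinned to `x (k - t)` up to one of the `5` allowed
differences; hence `7 ^ min n t * 5 ^ (n - t)` melodies.
-/

open Function

namespace Canon

section LagConstrained

variable {G : Type*} [AddGroup G]

def lagConstrained (t : ℕ) (A : Set G) (n : ℕ) : Set (ℕ → G) :=
  {x | (∀ k, k + t < n → x (k + t) - x k ∈ A) ∧ ∀ k, n ≤ k → x k = 0}

theorem natCard_eq_mul_of_mem_iff_update {S S' : Set (ℕ → G)} {n : ℕ} (c : (ℕ → G) → G)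
    (B : Set G) (hS : ∀ y ∈ S, y n = 0) (hc : ∀ x g, c (update x n g) = c x)
    (hS' : ∀ x, x ∈ S' ↔ update x n 0 ∈ S ∧ x n - c x ∈ B) :
    Nat.card S' = Nat.card S * Nat.card B := by
  rw [← Nat.card_prod]
  refine Nat.card_congr
    { toFun := fun x =>
        (⟨update x n 0, ((hS' x).1 x.2).1⟩, ⟨x.1 n - c x, ((hS' x).1 x.2).2⟩)
      invFun := fun yb => ⟨update yb.1 n (yb.2 + c yb.1), (hS' _).2 ⟨?_, ?_⟩⟩
      left_inv := fun x => ?_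
      right_inv := fun yb => ?_ }
  · rw [update_idem, ← hS _ yb.1.2, update_eq_self]
    exact yb.1.2
  · simp [hc, yb.2.2]
  · ext1
    simp [hc]
  · have := hS _ yb.1.2
    ext <;> simp [hc, ← this]

theorem mem_lagConstrained_succ_iff {t : ℕ} {A : Set G} {n : ℕ} {x : ℕ → G} :
    x ∈ lagConstrained t A (n + 1) ↔
      update x n 0 ∈ lagConstrained t A n ∧ (t ≤ n → x n - x (n - t) ∈ A) := by
  simp only [lagConstrained, Set.mem_ofPred_eq]
  constructor
  · rintro ⟨hA, h0⟩
    refine ⟨⟨fun k hk => ?_, fun k hk => ?_⟩, fun htn => ?_⟩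
    · rw [update_of_ne (by omega), update_of_ne (by omega)]
      exact hA k (by omega)
    · rcases eq_or_ne k n with rfl | hkn
      · exact update_self ..
      · rw [update_of_ne hkn]
        exact h0 k (by omega)
    · simpa [Nat.sub_add_cancel htn] using hA (n - t) (by omega)
  · rintro ⟨⟨hA, h0⟩, hlast⟩
    refine ⟨fun k hk => ?_, fun k hk => ?_⟩
    · rcases (by omega : k + t < n ∨ k + t = n) with hk | hk
      · simpa [update_of_ne (by omega : k + t ≠ n), update_of_ne (by omega : k ≠ n)]
          using hA k hk
      · obtain rfl : k = n - t := by omega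
        simpa [hk] using hlast (by omega)
    · simpa [update_of_ne (by omega : k ≠ n)] using h0 k (by omega)

theorem natCard_lagConstrained {t : ℕ} (ht : 0 < t) (A : Set G) (n : ℕ) :
    Nat.card (lagConstrained t A n) = Nat.card G ^ min n t * Nat.card A ^ (n - t) := by
  induction n with
  | zero =>
    have : lagConstrained t A 0 = {0} := by
      ext x
      simp [lagConstrained, funext_iff]
    simp [this]
  | succ n ih =>
    have hvanish : ∀ y ∈ lagConstrained t A n, y n = 0 := fun y hy => hy.2 n le_rfl
    rcases lt_or_ge n t with hn | hn
    · rw [natCard_eq_mul_of_mem_iff_update (fun _ => 0) Set.univ hvanish (fun _ _ => rfl)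
        (fun x => by simp [mem_lagConstrained_succ_iff, hn.not_ge]), ih, Nat.card_univ,
        min_eq_left hn.le, min_eq_left hn, Nat.sub_eq_zero_of_le hn.le,
        Nat.sub_eq_zero_of_le hn, pow_zero, mul_one, mul_one, pow_succ]
    · rw [natCard_eq_mul_of_mem_iff_update (fun x => x (n - t)) A hvanish
        (fun x g => update_of_ne (by omega) ..)
        (fun x => by simp [mem_lagConstrained_succ_iff, hn]), ih, min_eq_right hn,
        min_eq_right (by omega), Nat.sub_add_comm hn, pow_succ, mul_assoc]

end LagConstrained

theorem neg_mem_one_six {d : ZMod 7} :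
    -d ∈ ({1, 6} : Set (ZMod 7)) ↔ d ∈ ({1, 6} : Set (ZMod 7)) := by
  revert d
  decide

theorem natCard_sub_not_mem_one_six (p : ZMod 7) :
    Nat.card {d : ZMod 7 | d - p ∉ ({1, 6} : Set (ZMod 7))} = 5 := by
  rw [Nat.card_eq_fintype_card]
  revert p
  decide

theorem validOn_two_voice_iff {t : ℕ} {p : ZMod 7} {n : ℕ} {x : ℕ → ZMod 7} :
    ValidOn [⟨0, 0, false⟩, ⟨(t : ℤ), p, false⟩] n x ↔
      ∀ k, k + t < n → x (k + t) - x k ∈ {d | d - p ∉ ({1, 6} : Set (ZMod 7))} := by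
  constructor
  · intro h k hk
    simpa [sub_sub] using (h ⟨0, 0, false⟩ (by simp) ⟨t, p, false⟩ (by simp) (k + t) k hk
      (by omega) (by push_cast; ring)).1
  · intro h vi hvi vj hvj a b ha hb hab
    simp only [List.mem_cons, List.not_mem_nil, or_false] at hvi hvj
    refine ⟨?_, fun hbass => by rcases hvj with rfl | rfl <;> simp at hbass⟩
    rcases hvi with rfl | rfl <;> rcases hvj with rfl | rfl
    · obtain rfl : a = b := by simpa using hab
      rw [sub_self]
      decide
    · obtain rfl : a = b + t := by simp at hab; omega
      simpa [sub_sub] using h b ha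
    · obtain rfl : b = a + t := by simp at hab; omega
      rw [← neg_mem_one_six]
      simpa [sub_sub, neg_sub] using h a hb
    · obtain rfl : a = b := by simpa using hab
      rw [sub_self]
      decide

theorem V_two_voice_eq_natCard_lagConstrained (t : ℕ) (p : ZMod 7) (n : ℕ) :
    V [⟨0, 0, false⟩, ⟨(t : ℤ), p, false⟩] n =
      Nat.card (lagConstrained t {d | d - p ∉ ({1, 6} : Set (ZMod 7))} n) :=
  Nat.card_congr <| Equiv.subtypeEquivRight fun _ => and_congr_left' validOn_two_voice_iff

end Canon

/-- two-voice scheme {(0,0),(t,p)}, t > 0, no bass. -/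
theorem two_voice_nobass_count (t : ℕ) (ht : 0 < t) (p : ZMod 7) (n : ℕ) :
    (n ≤ t → V [⟨0, 0, false⟩, ⟨(t : ℤ), p, false⟩] n = 7 ^ n) ∧
    (t < n → V [⟨0, 0, false⟩, ⟨(t : ℤ), p, false⟩] n = 7 ^ t * 5 ^ (n - t)) := by
  have hV : V [⟨0, 0, false⟩, ⟨(t : ℤ), p, false⟩] n = 7 ^ min n t * 5 ^ (n - t) := by
    rw [Canon.V_two_voice_eq_natCard_lagConstrained, Canon.natCard_lagConstrained ht,
      Nat.card_zmod, Canon.natCard_sub_not_mem_one_six]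
  refine ⟨fun h => ?_, fun h => ?_⟩
  · rw [hV, min_eq_left h, Nat.sub_eq_zero_of_le h, pow_zero, mul_one]
  · rw [hV, min_eq_right h.le]
end

section
/- For the scheme S_Fib = {(0,0), (1,-8)B, (3,0)} (equivalently, with pitches taken mod 7, {(0,0), (1,6)B, (3,0)}), a melody (x_1,...,x_n) with n ≥ 2 is a valid canon if and only if every consecutive difference d_i = x_{i+1} - x_i lies in {1, 3, 4, 6} ⊂ ℤ/7ℤ (i.e., ±1 or ±3 steps), and consecutive differences obey: 3 may be followed by 1 or 3; 1 must be followed by 3; 4 may be followed by 4 or 6; 6 must be followed by 4; and no difference in {1,3} is ever adjacent to one in {4,6}. -/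
open Filter

/-- The Fibonacci scheme {(0,0),(1,6)B,(3,0)}. -/
def SFib : List Voice := [⟨0, 0, false⟩, ⟨1, 6, true⟩, ⟨3, 0, false⟩]

/-!
A pair of voices whose entries are `k` beats apart compares melody notes `k` positions apart,
so validity only constrains the intervals `x (b + k) - x b` for `k ≤ 3`: for the Fibonacci scheme
the intervals at lags 1 and 2 must be `±1` or `±3`, and those at lag 3 must avoid `±1`.
Writing the lag-2 and lag-3 intervals as sums of consecutive steps, the lag-2 condition is
exactly the edge relation of the difference graph, and the lag-3 condition follows from it.
-/

/-- Read `e` as `x a - x b` for melody positions with `a - b = k`. -/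
def AdmitsInterval (S : List Voice) (k : ℤ) (e : ZMod 7) : Prop :=
  ∀ vi ∈ S, ∀ vj ∈ S, vi.t + k = vj.t →
    (e + vi.p - vj.p ∉ ({1, 6} : Set (ZMod 7)) ∧ (vj.bass = true → e + vi.p - vj.p ≠ 3))

instance (S : List Voice) (k : ℤ) : DecidablePred (AdmitsInterval S k) :=
  fun _ => by unfold AdmitsInterval; infer_instance

theorem validOn_iff_forall_admitsInterval (S : List Voice) (n : ℕ) (x : ℕ → ZMod 7) :
    ValidOn S n x ↔
      ∀ a b : ℕ, a < n → b < n → AdmitsInterval S ((a : ℤ) - b) (x a - x b) := by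
  have hp : ∀ (a b : ℕ) (vi vj : Voice),
      x a + vi.p - (x b + vj.p) = x a - x b + vi.p - vj.p := fun _ _ _ _ => by ring
  have ht : ∀ (a b : ℕ) (vi vj : Voice),
      (a : ℤ) + vi.t = b + vj.t ↔ vi.t + (a - b) = vj.t := fun _ _ _ _ => by omega
  simp only [ValidOn, AdmitsInterval, hp, ht]
  exact ⟨fun h a b ha hb vi hi vj hj => h vi hi vj hj a b ha hb,
    fun h vi hi vj hj a b ha hb => h a b ha hb vi hi vj hj⟩

theorem validOn_iff_forall_lag (S : List Voice) (n : ℕ) (x : ℕ → ZMod 7) :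
    ValidOn S n x ↔ ∀ b k : ℕ, b + k < n →
      AdmitsInterval S k (x (b + k) - x b) ∧ AdmitsInterval S (-k) (-(x (b + k) - x b)) := by
  rw [validOn_iff_forall_admitsInterval]
  constructor
  · intro h b k hbk
    exact ⟨by simpa using h (b + k) b hbk (by omega), by simpa using h b (b + k) (by omega) hbk⟩
  · intro h a b ha hb
    rcases le_total b a with hba | hab
    · obtain ⟨k, rfl⟩ := Nat.exists_eq_add_of_le hba
      simpa using (h b k ha).1
    · obtain ⟨k, rfl⟩ := Nat.exists_eq_add_of_le hab
      simpa using (h a k hb).2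

abbrev fibSteps : Set (ZMod 7) := {1, 3, 4, 6}

abbrev fibEdges : Set (ZMod 7 × ZMod 7) := {(3, 3), (3, 1), (1, 3), (4, 4), (4, 6), (6, 4)}

theorem admitsInterval_SFib_one_iff (e : ZMod 7) :
    AdmitsInterval SFib 1 e ∧ AdmitsInterval SFib (-1) (-e) ↔ e ∈ fibSteps := by
  revert e; decide

theorem admitsInterval_SFib_two_iff (e : ZMod 7) :
    AdmitsInterval SFib 2 e ∧ AdmitsInterval SFib (-2) (-e) ↔ e ∈ fibSteps := by
  revert e; decide

theorem admitsInterval_SFib_three_iff (e : ZMod 7) :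
    AdmitsInterval SFib 3 e ∧ AdmitsInterval SFib (-3) (-e) ↔ e ∉ ({1, 6} : Set (ZMod 7)) := by
  revert e; decide

theorem admitsInterval_SFib_of_four_le_natAbs {k : ℤ} (hk : 4 ≤ k.natAbs) (e : ZMod 7) :
    AdmitsInterval SFib k e := by
  simp only [AdmitsInterval, SFib, List.mem_cons, List.not_mem_nil, or_false]
  rintro vi (rfl | rfl | rfl) vj (rfl | rfl | rfl) h <;> dsimp only at h <;> omega

theorem validOn_SFib_iff (n : ℕ) (x : ℕ → ZMod 7) :
    ValidOn SFib n x ↔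
      (∀ a, a + 1 < n → x (a + 1) - x a ∈ fibSteps) ∧
      (∀ a, a + 2 < n → x (a + 2) - x a ∈ fibSteps) ∧
      (∀ a, a + 3 < n → x (a + 3) - x a ∉ ({1, 6} : Set (ZMod 7))) := by
  rw [validOn_iff_forall_lag]
  constructor
  · intro h
    exact ⟨fun a ha => (admitsInterval_SFib_one_iff _).1 (h a 1 ha),
      fun a ha => (admitsInterval_SFib_two_iff _).1 (h a 2 ha),
      fun a ha => (admitsInterval_SFib_three_iff _).1 (h a 3 ha)⟩
  · rintro ⟨h₁, h₂, h₃⟩ b k hk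
    match k with
    | 0 => simp only [add_zero, sub_self, neg_zero, Nat.cast_zero]; decide
    | 1 => exact (admitsInterval_SFib_one_iff _).2 (h₁ b hk)
    | 2 => exact (admitsInterval_SFib_two_iff _).2 (h₂ b hk)
    | 3 => exact (admitsInterval_SFib_three_iff _).2 (h₃ b hk)
    | k + 4 => exact ⟨admitsInterval_SFib_of_four_le_natAbs (by omega) _,
        admitsInterval_SFib_of_four_le_natAbs (by omega) _⟩

theorem mem_fibEdges_iff (d₁ d₂ : ZMod 7) :
    (d₁, d₂) ∈ fibEdges ↔ d₁ ∈ fibSteps ∧ d₂ ∈ fibSteps ∧ d₁ + d₂ ∈ fibSteps := by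
  revert d₁ d₂; decide

theorem add_add_notMem_of_mem_fibEdges {d₁ d₂ d₃ : ZMod 7} (h₁₂ : (d₁, d₂) ∈ fibEdges)
    (h₂₃ : (d₂, d₃) ∈ fibEdges) : d₁ + d₂ + d₃ ∉ ({1, 6} : Set (ZMod 7)) := by
  suffices ∀ d₁ d₂ : ZMod 7, (d₁, d₂) ∈ fibEdges → ∀ d₃ : ZMod 7, (d₂, d₃) ∈ fibEdges →
      d₁ + d₂ + d₃ ∉ ({1, 6} : Set (ZMod 7)) from this _ _ h₁₂ _ h₂₃
  decide

theorem fib_scheme_characterization_general (n : ℕ) (x : ℕ → ZMod 7) :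
    ValidOn SFib n x ↔
      ((∀ i, i + 1 < n → x (i + 1) - x i ∈ ({1, 3, 4, 6} : Set (ZMod 7))) ∧
       (∀ i, i + 2 < n →
         (x (i + 1) - x i, x (i + 2) - x (i + 1)) ∈
           ({(3, 3), (3, 1), (1, 3), (4, 4), (4, 6), (6, 4)} :
             Set (ZMod 7 × ZMod 7)))) := by
  have lag₂ : ∀ i, x (i + 2) - x i = (x (i + 1) - x i) + (x (i + 2) - x (i + 1)) :=
    fun i => by ring
  have lag₃ : ∀ i, x (i + 3) - x i =
      (x (i + 1) - x i) + (x (i + 2) - x (i + 1)) + (x (i + 3) - x (i + 2)) := fun i => by ring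
  rw [validOn_SFib_iff]
  constructor
  · rintro ⟨h₁, h₂, -⟩
    refine ⟨h₁, fun i hi => (mem_fibEdges_iff _ _).2 ⟨h₁ i (by omega), h₁ (i + 1) hi, ?_⟩⟩
    rw [← lag₂]
    exact h₂ i hi
  · rintro ⟨h₁, h₂⟩
    refine ⟨h₁, fun i hi => ?_, fun i hi => ?_⟩
    · rw [lag₂]
      exact ((mem_fibEdges_iff _ _).1 (h₂ i hi)).2.2
    · rw [lag₃]
      exact add_add_notMem_of_mem_fibEdges (h₂ i (by omega)) (h₂ (i + 1) hi)

/-- characterization of valid canons for the Fibonacci scheme. -/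
theorem fib_scheme_characterization (n : ℕ) (hn : 2 ≤ n) (x : ℕ → ZMod 7) :
    ValidOn SFib n x ↔
      ((∀ i, i + 1 < n → x (i + 1) - x i ∈ ({1, 3, 4, 6} : Set (ZMod 7))) ∧
       (∀ i, i + 2 < n →
         (x (i + 1) - x i, x (i + 2) - x (i + 1)) ∈
           ({(3, 3), (3, 1), (1, 3), (4, 4), (4, 6), (6, 4)} :
             Set (ZMod 7 × ZMod 7)))) :=
  fib_scheme_characterization_general n x
end

section
/- For the scheme S_Fib = {(0,0), (1,6)B, (3,0)}, the counts of valid canons satisfy V_1 = 7, V_2 = 28, V_3 = 42, and the Fibonacci recurrence V_n = V_{n-1} + V_{n-2} for all n ≥ 4. -/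
open Filter

/-! For this scheme a melody is a valid canon exactly when every interval between notes one or two
positions apart is ±1 or ±3; the voices `(0,0)` and `(3,0)` impose nothing on each other, since
three consecutive steps of such a melody never sum to ±1. So a canon is a starting note followed
by a walk in which a step ±1 must be followed by the step ±3 of the same direction, and a step
±3 by ±3 or ±1 of the same direction. Weight each canon by its number of one-note extensions,
`#(next d)` for last step `d`: the weights of the extensions of a canon add up to its own weight
plus one. Summing over canons of length `n ≥ 2` gives `V (n + 2) = V (n + 1) + V n`. -/

open Finset Function

namespace SFib

def steps : Finset (ZMod 7) := {1, 3, 4, 6}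

def next (d : ZMod 7) : Finset (ZMod 7) := steps.filter fun e => d + e ∈ steps

lemma neg_mem_steps : ∀ d : ZMod 7, -d ∈ steps ↔ d ∈ steps := by decide

lemma bass_clash_free_iff : ∀ u v : ZMod 7,
    (¬(u - (v + 6) = 1 ∨ u - (v + 6) = 6) ∧ u - (v + 6) ≠ 3) ↔ u - v ∈ steps := by
  decide

lemma upper_clash_free : ∀ u v : ZMod 7,
    u - v ∈ steps → ¬(u + 6 - v = 1 ∨ u + 6 - v = 6) := by
  decide

lemma three_steps_clash_free : ∀ d₁ ∈ steps, ∀ d₂ ∈ next d₁, ∀ d₃ ∈ next d₂,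
    ¬(d₁ + d₂ + d₃ = 1 ∨ d₁ + d₂ + d₃ = 6) ∧
      ¬(-(d₁ + d₂ + d₃) = 1 ∨ -(d₁ + d₂ + d₃) = 6) := by
  decide

lemma sum_card_next_next : ∀ d ∈ steps, ∑ e ∈ next d, #(next e) = #(next d) + 1 := by
  decide

lemma sum_card_next_steps : ∑ d ∈ steps, #(next d) = 6 := by decide

def Stepwise (n : ℕ) (x : ℕ → ZMod 7) : Prop :=
  (∀ k, k + 2 ≤ n → x (k + 1) - x k ∈ steps) ∧
    (∀ k, k + 3 ≤ n → x (k + 2) - x k ∈ steps)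

section Stepwise

variable {n : ℕ} {x : ℕ → ZMod 7}

lemma mem_next_iff {k : ℕ} : x (k + 2) - x (k + 1) ∈ next (x (k + 1) - x k) ↔
    x (k + 2) - x (k + 1) ∈ steps ∧ x (k + 2) - x k ∈ steps := by
  rw [next, mem_filter, sub_add_sub_cancel']

lemma Stepwise.mem_next (hx : Stepwise n x) {k : ℕ} (hk : k + 3 ≤ n) :
    x (k + 2) - x (k + 1) ∈ next (x (k + 1) - x k) :=
  mem_next_iff.2 ⟨hx.1 (k + 1) (by omega), hx.2 k hk⟩

lemma Stepwise.sub_add_three (hx : Stepwise n x) {k : ℕ} (hk : k + 4 ≤ n) :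
    ¬(x (k + 3) - x k = 1 ∨ x (k + 3) - x k = 6) ∧
      ¬(x k - x (k + 3) = 1 ∨ x k - x (k + 3) = 6) := by
  have h := three_steps_clash_free _ (hx.1 k (by omega)) _ (hx.mem_next (by omega)) _
    (hx.mem_next (k := k + 1) (by omega))
  rwa [sub_add_sub_cancel', sub_add_sub_cancel', neg_sub] at h

theorem validOn_iff : ValidOn SFib n x ↔ Stepwise n x := by
  simp only [ValidOn, SFib, List.mem_cons, List.not_mem_nil, or_false, forall_eq_or_imp,
    forall_eq, Set.mem_insert_iff, Set.mem_singleton_iff, add_zero, Bool.false_eq_true,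
    IsEmpty.forall_iff, and_true, forall_const]
  constructor
  · rintro ⟨⟨-, h01, -⟩, -, ⟨-, h21, -⟩⟩
    refine ⟨fun k hk => ?_, fun k hk => ?_⟩
    · exact (bass_clash_free_iff _ _).1
        (h01 (k + 1) k (by omega) (by omega) (by push_cast; ring))
    · rw [← neg_mem_steps, neg_sub]
      exact (bass_clash_free_iff _ _).1
        (h21 k (k + 2) (by omega) (by omega) (by push_cast; ring))
  · intro hx
    refine ⟨⟨?_, ?_, ?_⟩, ⟨?_, ?_, ?_⟩, ⟨?_, ?_, ?_⟩⟩ <;> intro a b ha hb hab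
    · obtain rfl : a = b := by omega
      simp only [sub_self]
      decide
    · obtain rfl : a = b + 1 := by omega
      exact (bass_clash_free_iff _ _).2 (hx.1 b (by omega))
    · obtain rfl : a = b + 3 := by omega
      exact (hx.sub_add_three (by omega)).1
    · obtain rfl : b = a + 1 := by omega
      refine upper_clash_free _ _ ?_
      rw [← neg_mem_steps, neg_sub]
      exact hx.1 a (by omega)
    · obtain rfl : a = b := by omega
      simp only [sub_self]
      decide
    · obtain rfl : a = b + 2 := by omega
      exact upper_clash_free _ _ (hx.2 b (by omega))
    · obtain rfl : b = a + 3 := by omega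
      exact (hx.sub_add_three (by omega)).2
    · obtain rfl : b = a + 2 := by omega
      refine (bass_clash_free_iff _ _).2 ?_
      rw [← neg_mem_steps, neg_sub]
      exact hx.2 a (by omega)
    · obtain rfl : a = b := by omega
      simp only [sub_self]
      decide

lemma stepwise_congr {y : ℕ → ZMod 7} (h : ∀ k < n, x k = y k) :
    Stepwise n x ↔ Stepwise n y := by
  unfold Stepwise
  refine and_congr (forall_congr' fun k => imp_congr_right fun hk => ?_)
    (forall_congr' fun k => imp_congr_right fun hk => ?_) <;>
  rw [h k (by omega), h _ (by omega)]

lemma stepwise_update {m : ℕ} {c : ZMod 7} (h : n ≤ m) :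
    Stepwise n (update x m c) ↔ Stepwise n x :=
  stepwise_congr fun k hk => update_of_ne (show k ≠ m by omega) c x

lemma stepwise_two_iff : Stepwise 2 x ↔ x 1 - x 0 ∈ steps :=
  ⟨fun hx => hx.1 0 le_rfl,
    fun h => ⟨fun k hk => by rwa [show k = 0 by omega], fun k hk => by omega⟩⟩

lemma stepwise_add_three_iff : Stepwise (n + 3) x ↔
    Stepwise (n + 2) x ∧ x (n + 2) - x (n + 1) ∈ next (x (n + 1) - x n) := by
  rw [mem_next_iff]
  constructor
  · intro hx
    exact ⟨⟨fun k hk => hx.1 k (by omega), fun k hk => hx.2 k (by omega)⟩,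
      hx.1 (n + 1) le_rfl, hx.2 n le_rfl⟩
  · rintro ⟨hx, hlast, hlast₂⟩
    refine ⟨fun k hk => ?_, fun k hk => ?_⟩
    · obtain hk | rfl : k + 2 ≤ n + 2 ∨ k = n + 1 := by omega
      exacts [hx.1 k hk, hlast]
    · obtain hk | rfl : k + 3 ≤ n + 2 ∨ k = n := by omega
      exacts [hx.2 k hk, hlast₂]

end Stepwise

abbrev Canon (n : ℕ) : Type := {x : ℕ → ZMod 7 // Stepwise n x ∧ ∀ k, n ≤ k → x k = 0}

lemma V_eq_card_canon (n : ℕ) : V SFib n = Nat.card (Canon n) :=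
  Nat.card_congr (Equiv.subtypeEquivRight fun _ => and_congr_left' validOn_iff)

instance (n : ℕ) : Finite (Canon n) := by
  refine Finite.of_injective (fun x : Canon n => fun k : Fin n => x.1 k) fun x y h => ?_
  refine Subtype.ext (funext fun k => ?_)
  by_cases hk : k < n
  · exact congrFun h ⟨k, hk⟩
  · rw [x.2.2 k (by omega), y.2.2 k (by omega)]

noncomputable instance (n : ℕ) : Fintype (Canon n) := Fintype.ofFinite _

def Canon.lastStep {n : ℕ} (x : Canon (n + 2)) : ZMod 7 := x.1 (n + 1) - x.1 n

lemma Canon.lastStep_mem {n : ℕ} (x : Canon (n + 2)) : x.lastStep ∈ steps :=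
  x.2.1.1 n le_rfl

def canonSuccEquiv (n : ℕ) : Canon (n + 3) ≃ Σ y : Canon (n + 2), next y.lastStep where
  toFun x :=
    have hx := stepwise_add_three_iff.1 x.2.1
    ⟨⟨update x.1 (n + 2) 0, (stepwise_update le_rfl).2 hx.1, fun k hk => by
        obtain rfl | hk := eq_or_ne k (n + 2)
        · exact update_self ..
        · rw [update_of_ne hk, x.2.2 k (by omega)]⟩,
     ⟨x.1 (n + 2) - x.1 (n + 1), by simpa [Canon.lastStep] using hx.2⟩⟩
  invFun y := ⟨update y.1.1 (n + 2) (y.1.1 (n + 1) + y.2),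
    stepwise_add_three_iff.2 ⟨(stepwise_update le_rfl).2 y.1.2.1, by simp [Canon.lastStep]⟩,
    fun k hk => by rw [update_of_ne (by omega), y.1.2.2 k (by omega)]⟩
  left_inv x := by
    ext : 1
    simp
  right_inv y := by
    refine Sigma.subtype_ext (Subtype.ext ?_) ?_
    · simpa using (y.1.2.2 (n + 2) le_rfl).symm
    · simp

lemma Canon.lastStep_canonSuccEquiv_symm {n : ℕ} (y : Σ y : Canon (n + 2), next y.lastStep) :
    ((canonSuccEquiv n).symm y).lastStep = y.2 := by
  change update y.1.1 (n + 2) (y.1.1 (n + 1) + y.2) (n + 2) -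
    update y.1.1 (n + 2) (y.1.1 (n + 1) + y.2) (n + 1) = y.2
  rw [update_self, update_of_ne (by omega), add_sub_cancel_left]

lemma sum_lastStep_add_three (n : ℕ) (w : ZMod 7 → ℕ) :
    ∑ x : Canon (n + 3), w x.lastStep =
      ∑ y : Canon (n + 2), ∑ e ∈ next y.lastStep, w e := by
  rw [← (canonSuccEquiv n).symm.sum_comp, Fintype.sum_sigma]
  simp only [Canon.lastStep_canonSuccEquiv_symm, sum_coe_sort]

lemma card_canon_add_three (n : ℕ) :
    Nat.card (Canon (n + 3)) = ∑ y : Canon (n + 2), #(next y.lastStep) := by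
  simpa using sum_lastStep_add_three n 1

lemma card_canon_add_four (n : ℕ) :
    Nat.card (Canon (n + 4)) = Nat.card (Canon (n + 3)) + Nat.card (Canon (n + 2)) :=
  calc Nat.card (Canon (n + 4))
      _ = ∑ x : Canon (n + 3), #(next x.lastStep) := card_canon_add_three (n + 1)
      _ = ∑ y : Canon (n + 2), (#(next y.lastStep) + 1) := by
        rw [sum_lastStep_add_three n fun e => #(next e)]
        exact Fintype.sum_congr _ _ fun y => sum_card_next_next _ y.lastStep_mem
      _ = Nat.card (Canon (n + 3)) + Nat.card (Canon (n + 2)) := by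
        rw [sum_add_distrib, card_canon_add_three, Nat.card_eq_fintype_card,
          Fintype.card_eq_sum_ones]

def canonOneEquiv : Canon 1 ≃ ZMod 7 where
  toFun x := x.1 0
  invFun c := ⟨Pi.single 0 c, ⟨fun k hk => by omega, fun k hk => by omega⟩,
    fun k hk => by simp [show k ≠ 0 by omega]⟩
  left_inv x := by
    ext k
    obtain rfl | hk := eq_or_ne k 0
    · simp
    · exact (Pi.single_eq_of_ne hk _).trans (x.2.2 k (by omega)).symm
  right_inv c := by simp

def canonTwoEquiv : Canon 2 ≃ ZMod 7 × steps where
  toFun x := (x.1 0, ⟨x.lastStep, x.lastStep_mem⟩)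
  invFun p := ⟨update (Pi.single 0 p.1) 1 (p.1 + p.2), stepwise_two_iff.2 (by simp),
    fun k hk => by
      simp [update_of_ne (show k ≠ 1 by omega), Pi.single_eq_of_ne (show k ≠ 0 by omega)]⟩
  left_inv x := by
    ext k
    obtain rfl | rfl | hk : k = 0 ∨ k = 1 ∨ 2 ≤ k := by omega
    · simp
    · simp [Canon.lastStep]
    · simp [update_of_ne (show k ≠ 1 by omega), Pi.single_eq_of_ne (show k ≠ 0 by omega),
        x.2.2 k hk]
  right_inv p := by
    ext <;> simp [Canon.lastStep]

lemma card_canon_one : Nat.card (Canon 1) = 7 := by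
  rw [Nat.card_congr canonOneEquiv, Nat.card_zmod]

lemma card_canon_two : Nat.card (Canon 2) = 28 := by
  rw [Nat.card_congr canonTwoEquiv, Nat.card_prod, Nat.card_zmod, Nat.card_eq_fintype_card,
    Fintype.card_coe]
  rfl

lemma card_canon_three : Nat.card (Canon 3) = 42 := by
  rw [card_canon_add_three, Fintype.sum_equiv canonTwoEquiv (fun y => #(next y.lastStep))
    (fun p => #(next p.2)) fun _ => rfl, Fintype.sum_prod_type]
  simp only [sum_coe_sort steps fun d => #(next d), sum_card_next_steps]
  rfl

end SFib

/-- initial values and Fibonacci recurrence for the counts. -/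
theorem fib_scheme_counts :
    V SFib 1 = 7 ∧ V SFib 2 = 28 ∧ V SFib 3 = 42 ∧
    ∀ n : ℕ, 4 ≤ n → V SFib n = V SFib (n - 1) + V SFib (n - 2) := by
  simp only [SFib.V_eq_card_canon]
  refine ⟨SFib.card_canon_one, SFib.card_canon_two, SFib.card_canon_three, fun n hn => ?_⟩
  obtain ⟨m, rfl⟩ := Nat.exists_eq_add_of_le' hn
  exact SFib.card_canon_add_four m
end

section
/- Flexibility is invariant under inversion: given S = {(t_i, p_i)}, define S' with t_i' = t_i and p_i' = 5 − p_i if voice i is the marked bass, p_i' = −p_i otherwise (bass marking preserved). Then the map (x_k) ↦ (−x_k) is a bijection from valid canons of S to valid canons of S', so V_n(S') = V_n(S) and λ(S') = λ(S). -/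
open Filter

/-
Negating the melody negates every interval `d` between two simultaneous voices; inverting the
pitch displacements then adds `5` if the upper voice is the bass and subtracts `5` if the lower
one is. A finite check shows that this sends an interval that is allowed in both orders (`d` above
the lower voice, `-d` above the upper one) to an allowed interval. Inversion of a scheme is an
involution, so `x ↦ -x` is a bijection between the valid canons of the two schemes.
-/

namespace Voice

def invert (v : Voice) : Voice := ⟨v.t, if v.bass then 5 - v.p else -v.p, v.bass⟩

theorem invert_involutive : Function.Involutive invert := by
  rintro ⟨t, p, _ | _⟩ <;> simp [invert]

def bassShift (bass : Bool) : ZMod 7 := if bass then 5 else 0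

theorem invert_interval (v w : Voice) (y z : ZMod 7) :
    (-y + v.invert.p) - (-z + w.invert.p) =
      -((y + v.p) - (z + w.p)) + (bassShift v.bass - bassShift w.bass) := by
  rcases v with ⟨_, _, _ | _⟩ <;> rcases w with ⟨_, _, _ | _⟩ <;> simp [invert, bassShift] <;> ring

end Voice

def IsAllowedAbove (bass : Bool) (d : ZMod 7) : Prop :=
  d ∉ ({1, 6} : Set (ZMod 7)) ∧ (bass = true → d ≠ 3)

theorem isAllowedAbove_inversion :
    ∀ (bi bj : Bool) (d : ZMod 7), IsAllowedAbove bj d → IsAllowedAbove bi (-d) →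
      IsAllowedAbove bj (-d + (Voice.bassShift bi - Voice.bassShift bj)) := by
  simp only [IsAllowedAbove, Voice.bassShift, Set.mem_insert_iff, Set.mem_singleton_iff]
  decide

theorem ValidOn.map_invert {S : List Voice} {n : ℕ} {x : ℕ → ZMod 7} (h : ValidOn S n x) :
    ValidOn (S.map Voice.invert) n (fun k => -x k) := by
  simp only [ValidOn, List.forall_mem_map]
  intro v hv w hw a b ha hb hab
  have hvw : IsAllowedAbove w.bass ((x a + v.p) - (x b + w.p)) := h v hv w hw a b ha hb hab
  have hwv : IsAllowedAbove v.bass ((x b + w.p) - (x a + v.p)) :=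
    h w hw v hv b a hb ha hab.symm
  rw [← neg_sub] at hwv
  rw [Voice.invert_interval]
  exact isAllowedAbove_inversion v.bass w.bass _ hvw hwv

theorem validOn_map_invert_iff (S : List Voice) (n : ℕ) (x : ℕ → ZMod 7) :
    ValidOn (S.map Voice.invert) n (fun k => -x k) ↔ ValidOn S n x := by
  refine ⟨fun h => ?_, ValidOn.map_invert⟩
  simpa [List.map_map, Voice.invert_involutive.comp_self] using h.map_invert

theorem V_map_invert (S : List Voice) (n : ℕ) : V (S.map Voice.invert) n = V S n :=
  Nat.card_congr <| .symm <| (Equiv.neg _).subtypeEquiv fun x =>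
    and_congr (validOn_map_invert_iff S n x).symm (by simp)

/-- flexibility is invariant under inversion. -/
theorem inversion_invariance (S : List Voice) :
    (∀ (n : ℕ) (x : ℕ → ZMod 7),
      ValidOn S n x ↔
        ValidOn (S.map fun v => ⟨v.t, if v.bass then 5 - v.p else -v.p, v.bass⟩) n
          (fun k => -x k)) ∧
    (∀ n : ℕ,
      V (S.map fun v => ⟨v.t, if v.bass then 5 - v.p else -v.p, v.bass⟩) n = V S n) ∧
    (∀ L : ℝ,
      Tendsto (fun n : ℕ => (V S n : ℝ) ^ (1 / (n : ℝ))) atTop (nhds L) →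
      Tendsto (fun n : ℕ =>
        (V (S.map fun v => ⟨v.t, if v.bass then 5 - v.p else -v.p, v.bass⟩) n : ℝ)
          ^ (1 / (n : ℝ))) atTop (nhds L)) := by
  have hV : V (S.map Voice.invert) = V S := funext (V_map_invert S)
  refine ⟨fun n x => (validOn_map_invert_iff S n x).symm, V_map_invert S, fun L hL => ?_⟩
  change Tendsto (fun n : ℕ => (V (S.map Voice.invert) n : ℝ) ^ (1 / (n : ℝ))) atTop (nhds L)
  rwa [hV]
end

section
/- Time dilation by a positive integer c decomposes canons: if S = {(t_i, p_i)} is a scheme and S' = {(c·t_i, p_i)} (bass marking preserved), then a melody (x_1, ..., x_n) is a valid canon for S' if and only if each of the c subsequences (x_a, x_{c+a}, x_{2c+a}, ...) for 1 ≤ a ≤ c is a valid canon for S. Consequently, writing n = qc + ℓ with 0 ≤ ℓ < c, one has V_n(S') = V_q(S)^{c−ℓ} · V_{q+1}(S)^{ℓ}. -/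
open Filter

/-! Under the dilated scheme, positions `k` and `l` sound together in voices `i`, `j` exactly when
`k + c tᵢ = l + c tⱼ`. Reducing mod `c` forces `k ≡ l (mod c)`, and writing `k = i' c + r`,
`l = j' c + r` the condition becomes `i' + tᵢ = j' + tⱼ`, the coincidence condition of `S` on the
`r`-th residue subsequence. So validity splits over the `c` residue classes, the normalized melodies
for the dilated scheme are in bijection with `c`-tuples of normalized melodies for `S`, and for
`n = q c + ℓ` the residue class of `a` has `q + 1` elements if `a < ℓ` and `q` otherwise. -/

def dilate (c : ℕ) (S : List Voice) : List Voice :=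
  S.map fun v => ⟨(c : ℤ) * v.t, v.p, v.bass⟩

/-- The number of positions `k < n` with `k ≡ a (mod c)`, for `a < c`. -/
def subseqLength (c n a : ℕ) : ℕ := (n + c - 1 - a) / c

theorem lt_subseqLength_iff {c n a j : ℕ} (ha : a < c) :
    j < subseqLength c n a ↔ j * c + a < n := by
  rw [subseqLength, Nat.lt_iff_add_one_le, Nat.le_div_iff_mul_le (by omega), add_one_mul]
  omega

theorem subseqLength_mul_add {c q ℓ a : ℕ} (hℓ : ℓ < c) (ha : a < c) :
    subseqLength c (q * c + ℓ) a = if a < ℓ then q + 1 else q := by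
  have := add_one_mul q c
  have := add_one_mul (q + 1) c
  apply Nat.div_eq_of_lt_le <;> split_ifs <;> omega

theorem natCast_mul_add_add_mul_eq_iff {c i j r s : ℕ} {t t' : ℤ} (hr : r < c) (hs : s < c) :
    ((i * c + r : ℕ) : ℤ) + c * t = ((j * c + s : ℕ) : ℤ) + c * t' ↔
      r = s ∧ (i : ℤ) + t = j + t' := by
  constructor
  · intro h
    have hc : (c : ℤ) ≠ 0 := by omega
    have hrs : (r : ℤ) - s = c * (j + t' - i - t) := by push_cast at h; linear_combination h
    have hrs0 : (r : ℤ) - s = 0 :=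
      Int.eq_zero_of_abs_lt_dvd ⟨_, hrs⟩ (by rw [abs_lt]; omega)
    have hq : (j : ℤ) + t' - i - t = 0 := (mul_eq_zero.1 (hrs.symm.trans hrs0)).resolve_left hc
    exact ⟨by omega, by linarith⟩
  · rintro ⟨rfl, h⟩
    push_cast
    linear_combination (c : ℤ) * h

theorem validOn_dilate_iff {S : List Voice} {c : ℕ} (hc : 0 < c) (n : ℕ) (x : ℕ → ZMod 7) :
    ValidOn (dilate c S) n x ↔
      ∀ a < c, ValidOn S (subseqLength c n a) (fun j => x (j * c + a)) := by
  constructor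
  · intro h a ha vi hvi vj hvj i j hi hj hij
    exact h _ (List.mem_map_of_mem hvi) _ (List.mem_map_of_mem hvj) _ _
      ((lt_subseqLength_iff ha).1 hi) ((lt_subseqLength_iff ha).1 hj)
      ((natCast_mul_add_add_mul_eq_iff ha ha).2 ⟨rfl, hij⟩)
  · intro h _ hvi' _ hvj' k l hk hl hkl
    obtain ⟨vi, hvi, rfl⟩ := List.mem_map.1 hvi'
    obtain ⟨vj, hvj, rfl⟩ := List.mem_map.1 hvj'
    rw [← Nat.div_add_mod' k c] at hk hkl ⊢
    rw [← Nat.div_add_mod' l c] at hl hkl ⊢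
    have hkc : k % c < c := Nat.mod_lt k hc
    obtain ⟨hr, hij⟩ := (natCast_mul_add_add_mul_eq_iff hkc (Nat.mod_lt l hc)).1 hkl
    rw [← hr] at hl ⊢
    exact h _ hkc vi hvi vj hvj _ _
      ((lt_subseqLength_iff hkc).2 hk) ((lt_subseqLength_iff hkc).2 hl) hij

theorem Fin.prod_ite_val_lt {M : Type*} [CommMonoid M] {c ℓ : ℕ} (h : ℓ ≤ c) (u v : M) :
    ∏ a : Fin c, (if (a : ℕ) < ℓ then u else v) = u ^ ℓ * v ^ (c - ℓ) := by
  rw [Fin.prod_univ_eq_prod_range (fun a => if a < ℓ then u else v),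
    ← Finset.prod_range_mul_prod_Ico _ h,
    Finset.prod_congr rfl fun a ha => if_pos (Finset.mem_range.1 ha),
    Finset.prod_congr rfl fun a ha => if_neg (Finset.mem_Ico.1 ha).1.not_gt,
    Finset.prod_const, Finset.prod_const, Finset.card_range, Nat.card_Ico]

theorem forall_le_eq_zero_iff_subseq {α : Type*} [Zero α] {c : ℕ} (hc : 0 < c) (n : ℕ)
    (x : ℕ → α) :
    (∀ k, n ≤ k → x k = 0) ↔ ∀ a < c, ∀ j, subseqLength c n a ≤ j → x (j * c + a) = 0 := by
  constructor
  · intro h a ha j hj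
    exact h _ (not_lt.1 fun hlt => (lt_subseqLength_iff ha).2 hlt |>.not_ge hj)
  · intro h k hk
    rw [← Nat.div_add_mod' k c] at hk ⊢
    exact h _ (Nat.mod_lt k hc) _
      (not_lt.1 fun hlt => (lt_subseqLength_iff (Nat.mod_lt k hc)).1 hlt |>.not_ge hk)

def deinterleave (α : Type*) (c : ℕ) [NeZero c] : (ℕ → α) ≃ (Fin c → ℕ → α) :=
  (((Nat.divModEquiv c).trans (Equiv.prodComm _ _)).arrowCongr (Equiv.refl α)).trans
    (Equiv.curry _ _ _)

theorem deinterleave_apply {α : Type*} {c : ℕ} [NeZero c] (x : ℕ → α) (a : Fin c) (j : ℕ) :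
    deinterleave α c x a j = x (j * c + a) := rfl

theorem V_dilate (S : List Voice) (c : ℕ) [NeZero c] (n : ℕ) :
    V (dilate c S) n = ∏ a : Fin c, V S (subseqLength c n a) := by
  have hc := Nat.pos_of_neZero c
  unfold V
  rw [← Nat.card_pi]
  refine Nat.card_congr
    (((deinterleave _ c).subtypeEquiv fun x => ?_).trans Equiv.subtypePiEquivPi)
  rw [validOn_dilate_iff hc, forall_le_eq_zero_iff_subseq hc, Fin.forall_iff, ← forall₂_and]
  rfl

/-- time dilation by a positive integer decomposes canons. -/
theorem time_dilation_decomposition (S : List Voice) (c : ℕ) (hc : 0 < c) :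
    (∀ (n : ℕ) (x : ℕ → ZMod 7),
      ValidOn (S.map fun v => ⟨(c : ℤ) * v.t, v.p, v.bass⟩) n x ↔
        ∀ a < c, ValidOn S ((n + c - 1 - a) / c) (fun j => x (j * c + a))) ∧
    (∀ q ℓ : ℕ, ℓ < c →
      V (S.map fun v => ⟨(c : ℤ) * v.t, v.p, v.bass⟩) (q * c + ℓ) =
        V S q ^ (c - ℓ) * V S (q + 1) ^ ℓ) := by
  refine ⟨validOn_dilate_iff hc, fun q ℓ hℓ => ?_⟩
  have : NeZero c := .of_pos hc
  calc V (dilate c S) (q * c + ℓ)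
      = ∏ a : Fin c, V S (subseqLength c (q * c + ℓ) a) := V_dilate S c _
    _ = ∏ a : Fin c, if (a : ℕ) < ℓ then V S (q + 1) else V S q :=
        Finset.prod_congr rfl fun a _ => by rw [subseqLength_mul_add hℓ a.2, apply_ite (V S)]
    _ = V S q ^ (c - ℓ) * V S (q + 1) ^ ℓ := by rw [Fin.prod_ite_val_lt hℓ.le, mul_comm]
end

section
/- For the scheme S = {(0,0)B, (1,4), (2,0)} over ℤ/7ℤ (an inverting ∧-canon), for every n ≥ 2 the number of valid n-note canons is exactly V_n(S) = 14, i.e., there are exactly two valid canons up to transposition; consequently λ(S) = 1. -/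
/-!
A melody that moves by a constant step `d` makes every pair of voices sound the same interval at all
times, so its validity is a finite condition on `d`; for this scheme it holds exactly for `d = 0`
and `d = -1`. Conversely, the constraints between voices one beat apart force every step into
`{0, -1}`, and the bass against the third voice forbids a step `0` next to a step `-1`, so a valid
melody moves by a constant step. Valid canons are therefore parametrised by their first note and
their step: `7 · 2 = 14` of them.
-/

open Filter

theorem eq_add_nsmul_of_sub_eq {G : Type*} [AddCommGroup G] {n : ℕ} {x : ℕ → G} {d : G}
    (h : ∀ k, k + 1 < n → x (k + 1) - x k = d) : ∀ k < n, x k = x 0 + k • d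
  | 0, _ => by simp
  | k + 1, hk => by
    rw [succ_nsmul, ← add_assoc, ← eq_add_nsmul_of_sub_eq h k (by omega), ← h k hk]
    abel

theorem tendsto_const_rpow_one_div_nat {C : ℝ} (hC : C ≠ 0) :
    Tendsto (fun n : ℕ => C ^ (1 / (n : ℝ))) atTop (nhds 1) := by
  simpa using tendsto_const_nhds.rpow tendsto_one_div_atTop_nhds_zero_nat (Or.inl hC)

-- `(vj.t - vi.t) * d + vi.p - vj.p` is the interval that voices `vi`, `vj` sound at every common
-- time in a melody of constant step `d`.
def SlopeAdmissible (S : List Voice) (d : ZMod 7) : Prop :=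
  ∀ vi ∈ S, ∀ vj ∈ S, ((vj.t - vi.t : ℤ) : ZMod 7) * d + vi.p - vj.p ∉ ({1, 6} : Set (ZMod 7)) ∧
    (vj.bass = true → ((vj.t - vi.t : ℤ) : ZMod 7) * d + vi.p - vj.p ≠ 3)

def linearMelody (n : ℕ) (c d : ZMod 7) (k : ℕ) : ZMod 7 :=
  if k < n then c + k * d else 0

theorem validOn_linearMelody {S : List Voice} {d : ZMod 7} (hS : SlopeAdmissible S d)
    (n : ℕ) (c : ZMod 7) : ValidOn S n (linearMelody n c d) := by
  intro vi hi vj hj a b ha hb hab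
  have hdiff : (linearMelody n c d a + vi.p) - (linearMelody n c d b + vj.p) =
      ((vj.t - vi.t : ℤ) : ZMod 7) * d + vi.p - vj.p := by
    have : ((vj.t - vi.t : ℤ) : ZMod 7) = (a : ZMod 7) - b := by
      rw [show vj.t - vi.t = (a : ℤ) - b by omega]; push_cast; rfl
    simp only [linearMelody, if_pos ha, if_pos hb, this]
    ring
  rw [hdiff]
  exact hS vi hi vj hj

def inflexibleScheme : List Voice := [⟨0, 0, true⟩, ⟨1, 4, false⟩, ⟨2, 0, false⟩]

theorem slopeAdmissible_inflexibleScheme : ∀ d ∈ ({0, -1} : Finset (ZMod 7)),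
    SlopeAdmissible inflexibleScheme d := by
  unfold SlopeAdmissible inflexibleScheme
  decide

namespace ValidOn

variable {n : ℕ} {x : ℕ → ZMod 7}

theorem step_mem_inflexibleScheme (h : ValidOn inflexibleScheme n x) {k : ℕ} (hk : k + 1 < n) :
    x (k + 1) - x k ∈ ({0, -1} : Finset (ZMod 7)) := by
  have h₁ := h ⟨1, 4, false⟩ (by simp [inflexibleScheme]) ⟨0, 0, true⟩
    (by simp [inflexibleScheme]) k (k + 1) (by omega) hk (by push_cast; ring)
  have h₂ := (h ⟨2, 0, false⟩ (by simp [inflexibleScheme]) ⟨1, 4, false⟩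
    (by simp [inflexibleScheme]) k (k + 1) (by omega) hk (by push_cast; ring)).1
  simp only [Set.mem_insert_iff, Set.mem_singleton_iff] at h₁ h₂
  revert h₁ h₂
  generalize x k = u
  generalize x (k + 1) = v
  revert u v
  decide

theorem step_succ_eq_inflexibleScheme (h : ValidOn inflexibleScheme n x) {k : ℕ}
    (hk : k + 2 < n) : x (k + 2) - x (k + 1) = x (k + 1) - x k := by
  have hskip := (h ⟨0, 0, true⟩ (by simp [inflexibleScheme]) ⟨2, 0, false⟩
    (by simp [inflexibleScheme]) (k + 2) k hk (by omega) (by push_cast; ring)).1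
  rw [show x (k + 2) + 0 - (x k + 0) = (x (k + 2) - x (k + 1)) + (x (k + 1) - x k) by ring]
    at hskip
  have h₁ := h.step_mem_inflexibleScheme (k := k + 1) hk
  have h₂ := h.step_mem_inflexibleScheme (k := k) (by omega)
  simp only [Finset.mem_insert, Finset.mem_singleton, Set.mem_insert_iff,
    Set.mem_singleton_iff] at h₁ h₂ hskip
  rcases h₁ with h₁ | h₁ <;> rcases h₂ with h₂ | h₂ <;> rw [h₁, h₂] at hskip ⊢ <;> revert hskip <;>
    decide

theorem step_eq_inflexibleScheme (h : ValidOn inflexibleScheme n x) :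
    ∀ k, k + 1 < n → x (k + 1) - x k = x 1 - x 0
  | 0, _ => rfl
  | k + 1, hk => (h.step_succ_eq_inflexibleScheme hk).trans
      (h.step_eq_inflexibleScheme k (by omega))

theorem eq_linearMelody_inflexibleScheme (h : ValidOn inflexibleScheme n x)
    (hx : ∀ k, n ≤ k → x k = 0) : x = linearMelody n (x 0) (x 1 - x 0) := by
  funext k
  by_cases hk : k < n
  · rw [linearMelody, if_pos hk, ← nsmul_eq_mul]
    exact eq_add_nsmul_of_sub_eq h.step_eq_inflexibleScheme k hk
  · rw [linearMelody, if_neg hk, hx k (not_lt.1 hk)]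

end ValidOn

def inflexibleSchemeCanonsEquiv {n : ℕ} (hn : 2 ≤ n) :
    {x : ℕ → ZMod 7 // ValidOn inflexibleScheme n x ∧ ∀ k, n ≤ k → x k = 0} ≃
      ZMod 7 × ({0, -1} : Finset (ZMod 7)) where
  toFun x := (x.1 0, ⟨x.1 1 - x.1 0, x.2.1.step_mem_inflexibleScheme (by omega)⟩)
  invFun p := ⟨linearMelody n p.1 p.2, validOn_linearMelody
    (slopeAdmissible_inflexibleScheme _ p.2.2) n p.1,
    fun k hk => if_neg (not_lt.2 hk)⟩
  left_inv x := Subtype.ext (x.2.1.eq_linearMelody_inflexibleScheme x.2.2).symm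
  right_inv p := by
    simp [linearMelody, show 0 < n by omega, show 1 < n by omega]

theorem V_inflexibleScheme {n : ℕ} (hn : 2 ≤ n) : V inflexibleScheme n = 14 := by
  rw [V, Nat.card_congr (inflexibleSchemeCanonsEquiv hn), Nat.card_eq_fintype_card]
  rfl

/-- the inflexible scheme {(0,0)B,(1,4),(2,0)} admits exactly 14
valid canons of each length n ≥ 2, so its flexibility is 1. -/
theorem inflexible_scheme :
    (∀ n : ℕ, 2 ≤ n → V [⟨0, 0, true⟩, ⟨1, 4, false⟩, ⟨2, 0, false⟩] n = 14) ∧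
    Tendsto (fun n : ℕ =>
      (V [⟨0, 0, true⟩, ⟨1, 4, false⟩, ⟨2, 0, false⟩] n : ℝ) ^ (1 / (n : ℝ)))
      atTop (nhds 1) := by
  refine ⟨fun n hn => V_inflexibleScheme hn, ?_⟩
  refine (tendsto_const_rpow_one_div_nat (C := 14) (by norm_num)).congr' ?_
  filter_upwards [eventually_ge_atTop 2] with n hn
  rw [← inflexibleScheme, V_inflexibleScheme hn, Nat.cast_ofNat]
end
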